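/- arXiv:2105.07755 — 2 statements merged into one kernel-verified Lean document; each statement's English description precedes it below -/
import Mathlib

section
/- For c(t₁) > 0 integrable against e^{-t₁} on (0,∞), the functions u(t) = -log(∫_0^t c(t₁)e^{-t₁} dt₁) and s(t) = (∫_0^t ∫_0^{t₂} c(t₁)e^{-t₁} dt₁ dt₂)/(∫_0^t c(t₁)e^{-t₁} dt₁) satisfy the ODE system: (s + s'²/(u''s - s'')) e^{u - t} = 1/c(t) and s' - s u' = 1 on (0,∞); moreover s > 0, s' > 0, and u''s - s'' > 0 on (0,∞). -/
open MeasureTheory Real Set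

/-- The functions `u(t) = -log ∫_0^t c e^{-}` and
`s(t) = (∫_0^t ∫_0^{t₂} c e^{-})/(∫_0^t c e^{-})` solve the ODE system
`(s + s'²/(u''s - s'')) e^{u-t} = 1/c` and `s' - s u' = 1` on `(0,∞)`,
with `s > 0`, `s' > 0` and `u''s - s'' > 0`. -/
theorem stmt_7 (c : ℝ → ℝ) (hcpos : ∀ t, 0 < t → 0 < c t)
    (hcsmooth : ContDiffOn ℝ (⊤ : ℕ∞) c (Ioi 0))
    (hcint : IntegrableOn (fun l => c l * Real.exp (-l)) (Ioi 0))
    (hcdec : ∀ x y : ℝ, 0 < x → x ≤ y → c y * Real.exp (-y) ≤ c x * Real.exp (-x))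
    (u s : ℝ → ℝ)
    (hu : ∀ t, u t = -Real.log (∫ t₁ in Ioc 0 t, c t₁ * Real.exp (-t₁)))
    (hs : ∀ t, s t =
      (∫ t₂ in Ioc 0 t, ∫ t₁ in Ioc 0 t₂, c t₁ * Real.exp (-t₁)) /
        (∫ t₁ in Ioc 0 t, c t₁ * Real.exp (-t₁))) :
    ∀ t ∈ Ioi (0:ℝ),
      (s t + (deriv s t) ^ 2 / (deriv (deriv u) t * s t - deriv (deriv s) t)) *
          Real.exp (u t - t) = 1 / c t ∧
      deriv s t - s t * deriv u t = 1 ∧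
      0 < s t ∧ 0 < deriv s t ∧
      0 < deriv (deriv u) t * s t - deriv (deriv s) t := by
  intro t ht
  have ht0 : (0:ℝ) < t := ht
  set g : ℝ → ℝ := fun l => c l * Real.exp (-l) with hgdef
  set F : ℝ → ℝ := fun x => ∫ t₁ in Ioc 0 x, g t₁ with hFdef
  set G : ℝ → ℝ := fun x => ∫ t₂ in Ioc 0 x, F t₂ with hGdef
  have hu2 : u = fun x => -Real.log (F x) := funext hu
  have hs2 : s = fun x => G x / F x := funext hs
  have hgcont : ContinuousOn g (Ioi 0) :=
    hcsmooth.continuousOn.mul (Real.continuous_exp.comp continuous_neg).continuousOn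
  have hgpos : ∀ x : ℝ, 0 < x → 0 < g x := fun x hx =>
    mul_pos (hcpos x hx) (Real.exp_pos _)
  have hgint : ∀ x : ℝ, IntegrableOn g (Ioc 0 x) := fun x =>
    hcint.mono_set Ioc_subset_Ioi_self
  have hgii : ∀ x : ℝ, 0 ≤ x → IntervalIntegrable g volume 0 x := fun x hx =>
    (intervalIntegrable_iff_integrableOn_Ioc_of_le hx).2 (hgint x)
  have hFeq : ∀ x : ℝ, 0 ≤ x → F x = ∫ l in (0:ℝ)..x, g l := fun x hx =>
    (intervalIntegral.integral_of_le hx).symm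
  have hFpos : ∀ x : ℝ, 0 < x → 0 < F x := by
    intro x hx
    rw [hFeq x hx.le]
    exact intervalIntegral.intervalIntegral_pos_of_pos_on (hgii x hx.le) (fun y hy => hgpos y hy.1) hx
  have hFmono : Monotone F := by
    intro x y hxy
    refine setIntegral_mono_set (hgint y) ?_ ((Ioc_subset_Ioc_right hxy).eventuallyLE)
    exact (ae_restrict_iff' measurableSet_Ioc).2
      (Filter.Eventually.of_forall fun z hz => (hgpos z hz.1).le)
  have hFderiv : ∀ x : ℝ, 0 < x → HasDerivAt F (g x) x := by
    intro x hx
    have h1 : HasDerivAt (fun y => ∫ l in (0:ℝ)..y, g l) (g x) x :=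
      intervalIntegral.integral_hasDerivAt_right (hgii x hx.le)
        ⟨Ioi 0, Ioi_mem_nhds hx, hgcont.aestronglyMeasurable measurableSet_Ioi⟩
        (hgcont.continuousAt (Ioi_mem_nhds hx))
    exact h1.congr_of_eventuallyEq
      (Filter.eventuallyEq_of_mem (Ioi_mem_nhds hx) fun y hy => hFeq y (le_of_lt hy))
  have hFii : ∀ x y : ℝ, IntervalIntegrable F volume x y := fun x y =>
    (hFmono.monotoneOn _).intervalIntegrable
  have hGeq : ∀ x : ℝ, 0 ≤ x → G x = ∫ l in (0:ℝ)..x, F l := fun x hx =>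
    (intervalIntegral.integral_of_le hx).symm
  have hGderiv : ∀ x : ℝ, 0 < x → HasDerivAt G (F x) x := by
    intro x hx
    have h1 : HasDerivAt (fun y => ∫ l in (0:ℝ)..y, F l) (F x) x :=
      intervalIntegral.integral_hasDerivAt_right (hFii 0 x)
        ⟨univ, Filter.univ_mem, hFmono.measurable.aestronglyMeasurable.restrict⟩
        (hFderiv x hx).continuousAt
    exact h1.congr_of_eventuallyEq
      (Filter.eventuallyEq_of_mem (Ioi_mem_nhds hx) fun y hy => hGeq y (le_of_lt hy))
  have hGpos : 0 < G t := by
    rw [hGeq t ht0.le]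
    exact intervalIntegral.intervalIntegral_pos_of_pos_on (hFii 0 t) (fun y hy => hFpos y hy.1) ht0
  -- derivative of c and g
  have hcd : ∀ x : ℝ, 0 < x → HasDerivAt c (deriv c x) x := fun x hx =>
    ((hcsmooth.contDiffAt (Ioi_mem_nhds hx)).differentiableAt (by simp)).hasDerivAt
  have hgd : ∀ x : ℝ, 0 < x →
      HasDerivAt g (deriv c x * Real.exp (-x) + c x * (Real.exp (-x) * -1)) x := by
    intro x hx
    have he : HasDerivAt (fun y : ℝ => Real.exp (-y)) (Real.exp (-x) * -1) x :=
      (Real.hasDerivAt_exp (-x)).comp x (hasDerivAt_neg x)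
    exact (hcd x hx).mul he
  -- first derivatives of u and s
  have hu1 : ∀ x : ℝ, 0 < x →
      HasDerivAt (fun y => -Real.log (F y)) (-(g x / F x)) x := fun x hx =>
    ((hFderiv x hx).log (hFpos x hx).ne').neg
  have hs1 : ∀ x : ℝ, 0 < x → HasDerivAt (fun y => G y / F y)
      ((F x * F x - G x * g x) / F x ^ 2) x := fun x hx =>
    (hGderiv x hx).div (hFderiv x hx) (hFpos x hx).ne'
  have hdu : deriv (fun y => -Real.log (F y)) t = -(g t / F t) := (hu1 t ht0).deriv
  have hds : deriv (fun y => G y / F y) t = (F t * F t - G t * g t) / F t ^ 2 :=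
    (hs1 t ht0).deriv
  -- second derivatives
  have hddu : deriv (deriv (fun y => -Real.log (F y))) t =
      -(((deriv c t * Real.exp (-t) + c t * (Real.exp (-t) * -1)) * F t - g t * g t) /
        F t ^ 2) := by
    have heq : deriv (fun y => -Real.log (F y)) =ᶠ[nhds t] fun y => -(g y / F y) :=
      Filter.eventuallyEq_of_mem (Ioi_mem_nhds ht0) fun y hy => (hu1 y hy).deriv
    rw [heq.deriv_eq]
    exact (((hgd t ht0).div (hFderiv t ht0) (hFpos t ht0).ne').neg).deriv
  have hN : HasDerivAt (fun y => F y * F y - G y * g y)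
      (g t * F t + F t * g t -
        (F t * g t + G t * (deriv c t * Real.exp (-t) + c t * (Real.exp (-t) * -1)))) t :=
    ((hFderiv t ht0).mul (hFderiv t ht0)).sub ((hGderiv t ht0).mul (hgd t ht0))
  have hdds' := ((hN.fun_div ((hFderiv t ht0).fun_pow 2)
    (pow_ne_zero 2 (hFpos t ht0).ne'))).deriv
  have hdds : deriv (deriv (fun y => G y / F y)) t =
      deriv (fun y => (F y * F y - G y * g y) / F y ^ 2) t := by
    have heq : deriv (fun y => G y / F y) =ᶠ[nhds t]
        fun y => (F y * F y - G y * g y) / F y ^ 2 :=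
      Filter.eventuallyEq_of_mem (Ioi_mem_nhds ht0) fun y hy => (hs1 y hy).deriv
    exact heq.deriv_eq
  rw [hdds'] at hdds
  -- inequalities
  have hm0 : 0 < t / 2 := by linarith
  have hmt : t / 2 < t := by linarith
  have hFm_lt : F (t / 2) < F t := by
    have hsplit : ∫ l in (0:ℝ)..t, g l =
        (∫ l in (0:ℝ)..t/2, g l) + ∫ l in (t/2)..t, g l :=
      (intervalIntegral.integral_add_adjacent_intervals (hgii _ hm0.le)
        ((intervalIntegrable_iff_integrableOn_Ioc_of_le hmt.le).2
          (hcint.mono_set fun z hz => lt_trans hm0 hz.1))).symm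
    have hpos : 0 < ∫ l in (t/2)..t, g l :=
      intervalIntegral.intervalIntegral_pos_of_pos_on
        ((intervalIntegrable_iff_integrableOn_Ioc_of_le hmt.le).2
          (hcint.mono_set fun z hz => lt_trans hm0 hz.1))
        (fun y hy => hgpos y (lt_trans hm0 hy.1)) hmt
    have := hFeq t ht0.le
    have := hFeq (t/2) hm0.le
    rw [hFeq t ht0.le, hFeq (t/2) hm0.le, hsplit]
    linarith
  have hGlt : G t < t * F t := by
    have hsplit : G t = (∫ l in (0:ℝ)..t/2, F l) + ∫ l in (t/2)..t, F l := by
      rw [hGeq t ht0.le]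
      exact (intervalIntegral.integral_add_adjacent_intervals (hFii 0 (t/2))
        (hFii (t/2) t)).symm
    have hb1 : (∫ l in (0:ℝ)..t/2, F l) ≤ (t/2) * F (t/2) := by
      have := intervalIntegral.integral_mono_on hm0.le (hFii 0 (t/2))
        (intervalIntegrable_const (c := F (t/2)))
        (fun x hx => hFmono hx.2)
      simpa using this
    have hb2 : (∫ l in (t/2)..t, F l) ≤ (t - t/2) * F t := by
      have := intervalIntegral.integral_mono_on hmt.le (hFii (t/2) t)
        (intervalIntegrable_const (c := F t))
        (fun x hx => hFmono hx.2)
      simpa using this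
    have hFt : 0 < F t := hFpos t ht0
    nlinarith [hFpos (t/2) hm0]
  have htg : t * g t ≤ F t := by
    have hconst : IntegrableOn (fun _ : ℝ => g t) (Ioc 0 t) := integrableOn_const
      (by rw [Real.volume_Ioc]; exact ENNReal.ofReal_ne_top)
    have hmono : ∀ x ∈ Ioc (0:ℝ) t, g t ≤ g x := fun x hx => hcdec x t hx.1 hx.2
    have h1 : ∫ _ in Ioc (0:ℝ) t, g t ≤ ∫ x in Ioc (0:ℝ) t, g x :=
      setIntegral_mono_on hconst (hgint t) measurableSet_Ioc hmono
    have h2 : ∫ _ in Ioc (0:ℝ) t, g t = t * g t := by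
      rw [setIntegral_const, Real.volume_real_Ioc_of_le ht0.le, smul_eq_mul, sub_zero]
    rw [← h2]
    exact h1
  have hkey : G t * g t < F t * F t := by
    have h1 : G t * g t < (t * F t) * g t :=
      mul_lt_mul_of_pos_right hGlt (hgpos t ht0)
    have h2 : (t * g t) * F t ≤ F t * F t :=
      mul_le_mul_of_nonneg_right htg (hFpos t ht0).le
    nlinarith
  have hFt : 0 < F t := hFpos t ht0
  have hgt : 0 < g t := hgpos t ht0
  have hsp : 0 < (F t * F t - G t * g t) / F t ^ 2 :=
    div_pos (by linarith) (pow_pos hFt 2)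
  -- key identity : u'' s - s'' = (g/F) * s'
  have hK : deriv (deriv (fun y => -Real.log (F y))) t * (G t / F t) -
      deriv (deriv (fun y => G y / F y)) t =
      g t / F t * ((F t * F t - G t * g t) / F t ^ 2) := by
    rw [hddu, hdds]
    field_simp
    ring
  have hKpos : 0 < deriv (deriv (fun y => -Real.log (F y))) t * (G t / F t) -
      deriv (deriv (fun y => G y / F y)) t := by
    rw [hK]
    exact mul_pos (div_pos hgt hFt) hsp
  have hge : g t = c t * Real.exp (-t) := rfl
  simp only [hu2, hs2]
  refine ⟨?_, ?_, ?_, ?_, ?_⟩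
  · rw [hK, hds]
    have hexp : Real.exp (-Real.log (F t) - t) = (F t)⁻¹ * Real.exp (-t) := by
      rw [sub_eq_add_neg, Real.exp_add, Real.exp_neg, Real.exp_log hFt]
    rw [hexp, hge]
    have hne : F t * F t - G t * g t ≠ 0 := by linarith
    rw [hge] at hne
    have hct : c t ≠ 0 := (hcpos t ht0).ne'
    have hexpne : Real.exp (-t) ≠ 0 := (Real.exp_pos _).ne'
    field_simp
    ring_nf
  · rw [hds, hdu]
    field_simp
    ring
  · exact div_pos hGpos hFt
  · rw [hds]; exact hsp
  · exact hKpos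
end

section
/- Suppose G : [0,∞) → [0,∞) is decreasing, lower semicontinuous, G(0) < ∞, lim_{t→∞} G(t) = 0, G is right-continuous, and for every t₀ > 0, G(0) - G(t₀) ≤ ((∫_0^{t₀} c(s)e^{-s}ds)/(c(t₀)e^{-t₀})) · liminf_{B→0⁺} (G(t₀) - G(t₀+B))/B, where c : (0,∞) → (0,∞) is continuous with c(t)e^{-t} decreasing and integrable on (0,∞). Then G(t) ≥ (∫_t^∞ c(s)e^{-s}ds / ∫_0^∞ c(s)e^{-s}ds) · G(0) for all t ≥ 0. -/
open MeasureTheory Real Set Filter Topology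

/-- A lower semicontinuous function, bounded below on a nonempty compact set,
attains its minimum there. -/
private lemma lsc_min_on_compact {f : ℝ → ℝ} {s : Set ℝ} (hs : IsCompact s)
    (hne : s.Nonempty) (hf : LowerSemicontinuousOn f s) {b : ℝ}
    (hbd : ∀ x ∈ s, b ≤ f x) :
    ∃ x ∈ s, ∀ y ∈ s, f x ≤ f y := by
  set m := sInf (f '' s) with hm
  have hne' : (f '' s).Nonempty := hne.image f
  have hbdd : BddBelow (f '' s) := ⟨b, by rintro _ ⟨x, hx, rfl⟩; exact hbd x hx⟩
  have hseq : ∀ n : ℕ, ∃ x ∈ s, f x < m + 1 / ((n : ℝ) + 1) := by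
    intro n
    have hlt : m < m + 1 / ((n : ℝ) + 1) := by
      have : (0:ℝ) < 1 / ((n : ℝ) + 1) := by positivity
      linarith
    obtain ⟨y, ⟨x, hx, rfl⟩, hy⟩ := exists_lt_of_csInf_lt hne' hlt
    exact ⟨x, hx, hy⟩
  choose x hxs hxlt using hseq
  obtain ⟨a, ha, φ, hφ, hconv⟩ := hs.tendsto_subseq hxs
  have hlow : ∀ n : ℕ, m ≤ f (x (φ n)) := fun n => csInf_le hbdd ⟨_, hxs _, rfl⟩
  have hup : ∀ n : ℕ, f (x (φ n)) ≤ m + 1 / ((n : ℝ) + 1) := by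
    intro n
    refine (hxlt (φ n)).le.trans (add_le_add (le_refl m) ?_)
    have h1 : (n : ℝ) + 1 ≤ (φ n : ℝ) + 1 := by
      have h0 : n ≤ φ n := hφ.le_apply
      have : (n : ℝ) ≤ (φ n : ℝ) := by exact_mod_cast h0
      linarith
    exact one_div_le_one_div_of_le (by positivity) h1
  have haux : Tendsto (fun n : ℕ => m + 1 / ((n : ℝ) + 1)) atTop (𝓝 (m + 0)) :=
    tendsto_const_nhds.add tendsto_one_div_add_atTop_nhds_zero_nat
  rw [add_zero] at haux
  have hlim : Tendsto (fun n : ℕ => f (x (φ n))) atTop (𝓝 m) :=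
    tendsto_of_tendsto_of_tendsto_of_le_of_le tendsto_const_nhds haux hlow hup
  have hfa : f a ≤ m := by
    by_contra h
    push_neg at h
    obtain ⟨y, hy1, hy2⟩ := exists_between h
    have hev' := hf a ha y hy2
    have htends : Tendsto (fun n : ℕ => x (φ n)) atTop (𝓝[s] a) :=
      tendsto_nhdsWithin_of_tendsto_nhds_of_eventually_within _ hconv
        (Eventually.of_forall fun n => hxs _)
    have hev : ∀ᶠ n in atTop, y < f (x (φ n)) := htends.eventually hev'
    have : y ≤ m := ge_of_tendsto hlim (hev.mono fun n h => h.le)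
    exact absurd hy1 (not_lt.2 this)
  exact ⟨a, ha, fun y hy => hfa.trans (csInf_le hbdd ⟨y, hy, rfl⟩)⟩

/-- Abstract real-variable lemma: if `G : [0,∞) → [0,∞)` is decreasing, lower
semicontinuous, right-continuous, tends to `0` at `∞` and satisfies the
differential inequality
`G(0) - G(t₀) ≤ (∫_0^{t₀} c e^{-s} / (c(t₀)e^{-t₀})) liminf_{B→0⁺} (G(t₀)-G(t₀+B))/B`,
then `G(t) ≥ (∫_t^∞ c e^{-s} / ∫_0^∞ c e^{-s}) G(0)` for all `t ≥ 0`. -/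
theorem stmt_15 (c : ℝ → ℝ) (hcpos : ∀ t, 0 < t → 0 < c t)
    (hccont : ContinuousOn c (Ioi 0))
    (hcdec : ∀ x y : ℝ, 0 < x → x ≤ y → c y * Real.exp (-y) ≤ c x * Real.exp (-x))
    (hcint : IntegrableOn (fun s => c s * Real.exp (-s)) (Ioi 0))
    (G : ℝ → ℝ) (hGnonneg : ∀ t ∈ Ici (0:ℝ), 0 ≤ G t)
    (hGdec : AntitoneOn G (Ici 0))
    (hGlsc : LowerSemicontinuousOn G (Ici 0))
    (hGlim : Tendsto G atTop (nhds 0))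
    (hGrc : ∀ t₀ ∈ Ici (0:ℝ), Tendsto G (nhdsWithin t₀ (Ioi t₀)) (nhds (G t₀)))
    (hineq : ∀ t₀ : ℝ, 0 < t₀ →
      G 0 - G t₀ ≤
        ((∫ s in Ioc (0:ℝ) t₀, c s * Real.exp (-s)) / (c t₀ * Real.exp (-t₀))) *
          liminf (fun B => (G t₀ - G (t₀ + B)) / B) (nhdsWithin 0 (Ioi 0))) :
    ∀ t : ℝ, 0 ≤ t →
      ((∫ s in Ioi t, c s * Real.exp (-s)) / (∫ s in Ioi (0:ℝ), c s * Real.exp (-s)))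
          * G 0 ≤ G t := by
  set f : ℝ → ℝ := fun s => c s * Real.exp (-s) with hfdef
  have hfpos : ∀ s : ℝ, 0 < s → 0 < f s := fun s hs =>
    mul_pos (hcpos s hs) (Real.exp_pos _)
  -- integrability on subsets
  have hIntIoi : ∀ t : ℝ, 0 ≤ t → IntegrableOn f (Ioi t) :=
    fun t ht => hcint.mono_set (Ioi_subset_Ioi ht)
  have hIntIoc : ∀ a b : ℝ, 0 ≤ a → IntegrableOn f (Ioc a b) := fun a b ha =>
    hcint.mono_set ((Ioc_subset_Ioi_self).trans (Ioi_subset_Ioi ha))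
  -- splitting lemma
  have hsplit : ∀ a b : ℝ, 0 ≤ a → a ≤ b →
      ∫ s in Ioi a, f s = (∫ s in Ioc a b, f s) + ∫ s in Ioi b, f s := by
    intro a b ha hab
    rw [← setIntegral_union Ioc_disjoint_Ioi_same measurableSet_Ioi
      (hIntIoc a b ha) (hIntIoi b (ha.trans hab)), Ioc_union_Ioi_eq_Ioi hab]
  -- nonnegativity
  have hIocNonneg : ∀ a b : ℝ, 0 ≤ a → 0 ≤ ∫ s in Ioc a b, f s := fun a b ha =>
    setIntegral_nonneg measurableSet_Ioc fun x hx => (hfpos x (ha.trans_lt hx.1)).le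
  have hIoiNonneg : ∀ t : ℝ, 0 ≤ t → 0 ≤ ∫ s in Ioi t, f s := fun t ht =>
    setIntegral_nonneg measurableSet_Ioi fun x hx => (hfpos x (ht.trans_lt hx)).le
  -- total integral positive
  set I0 : ℝ := ∫ s in Ioi (0:ℝ), f s with hI0def
  have hI0pos : 0 < I0 := by
    have h1 : 0 ≤ᵐ[volume.restrict (Ioi (0:ℝ))] f :=
      (ae_restrict_iff' measurableSet_Ioi).2 (ae_of_all _ fun x hx => (hfpos x hx).le)
    rw [hI0def, setIntegral_pos_iff_support_of_nonneg_ae h1 (hIntIoi 0 le_rfl)]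
    have hsub : Ioi (0:ℝ) ⊆ Function.support f ∩ Ioi 0 :=
      fun x hx => ⟨ne_of_gt (hfpos x hx), hx⟩
    calc (0:ENNReal) < volume (Ioi (0:ℝ)) := by simp [Real.volume_Ioi]
    _ ≤ volume (Function.support f ∩ Ioi 0) := measure_mono hsub
  -- limit of the tail integral
  have hIocLim : Tendsto (fun t : ℝ => ∫ s in Ioc (0:ℝ) t, f s) atTop (𝓝 I0) := by
    have h := intervalIntegral_tendsto_integral_Ioi 0 hcint tendsto_id
    refine h.congr' ?_
    filter_upwards [eventually_ge_atTop (0:ℝ)] with t ht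
    simp only [id_eq]
    rw [intervalIntegral.integral_of_le ht]
  have hIlim : Tendsto (fun t : ℝ => ∫ s in Ioi t, f s) atTop (𝓝 0) := by
    have h : Tendsto (fun t : ℝ => I0 - ∫ s in Ioc (0:ℝ) t, f s) atTop (𝓝 (I0 - I0)) :=
      tendsto_const_nhds.sub hIocLim
    rw [sub_self] at h
    refine h.congr' ?_
    filter_upwards [eventually_ge_atTop (0:ℝ)] with t ht
    rw [hI0def, hsplit 0 t le_rfl ht]; ring
  -- continuity of the tail integral on [0, ∞)
  have hIcont : ContinuousOn (fun t : ℝ => ∫ s in Ioi t, f s) (Ici 0) := by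
    set f' : ℝ → ℝ := (Ioi (0:ℝ)).indicator f with hf'def
    have hf'int : Integrable f' := by
      rw [hf'def, integrable_indicator_iff measurableSet_Ioi]; exact hcint
    have hprim : Continuous fun t : ℝ => ∫ x in (0:ℝ)..t, f' x :=
      hf'int.continuous_primitive 0
    have hcont2 : ContinuousOn (fun t : ℝ => I0 - ∫ x in (0:ℝ)..t, f' x) (Ici 0) :=
      (continuousOn_const.sub hprim.continuousOn)
    refine hcont2.congr ?_
    intro t ht
    have h1 : ∫ x in (0:ℝ)..t, f' x = ∫ x in Ioc (0:ℝ) t, f x := by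
      rw [intervalIntegral.integral_of_le ht, hf'def,
        setIntegral_indicator measurableSet_Ioi,
        inter_eq_self_of_subset_left Ioc_subset_Ioi_self]
    show (∫ s in Ioi t, f s) = I0 - ∫ x in (0:ℝ)..t, f' x
    rw [h1, hI0def, hsplit 0 t le_rfl ht]; ring
  -- the function H
  set H : ℝ → ℝ := fun t => G t - (∫ s in Ioi t, f s) / I0 * G 0 with hHdef
  have hH0 : H 0 = 0 := by
    simp only [hHdef, ← hI0def, div_self (ne_of_gt hI0pos), one_mul, sub_self]
  have hHlsc : LowerSemicontinuousOn H (Ici 0) := by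
    have hc2 : ContinuousOn (fun t : ℝ => -((∫ s in Ioi t, f s) / I0 * G 0)) (Ici 0) :=
      (((hIcont.div_const I0).mul continuousOn_const)).neg
    have h := hGlsc.add hc2.lowerSemicontinuousOn
    simp only [hHdef, sub_eq_add_neg]
    exact h
  have hHlim : Tendsto H atTop (𝓝 0) := by
    have h : Tendsto (fun t : ℝ => G t - (∫ s in Ioi t, f s) / I0 * G 0) atTop
        (𝓝 (0 - 0 / I0 * G 0)) :=
      hGlim.sub ((hIlim.div_const I0).mul_const (G 0))
    simpa using h
  -- main argument by contradiction
  intro t ht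
  by_contra hcon
  push_neg at hcon
  have hHt : H t < 0 := sub_neg.mpr hcon
  obtain ⟨T₀, hT₀⟩ := eventually_atTop.1 (hHlim.eventually (eventually_gt_nhds (show H t / 2 < 0 by linarith)))
  set T := max T₀ t with hTdef
  have hTt : t ≤ T := le_max_right _ _
  have hT0 : (0:ℝ) ≤ T := ht.trans hTt
  have hbd : ∀ u ∈ Icc (0:ℝ) T, -(G 0) ≤ H u := by
    intro u hu
    have h1 : 0 ≤ G u := hGnonneg u hu.1
    have h4 : (∫ s in Ioi u, f s) / I0 * G 0 ≤ 1 * G 0 := by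
      apply mul_le_mul_of_nonneg_right _ (hGnonneg 0 Set.self_mem_Ici)
      rw [div_le_one hI0pos, hI0def, hsplit 0 u le_rfl hu.1]
      linarith [hIocNonneg 0 u le_rfl]
    rw [one_mul] at h4
    simp only [hHdef]
    linarith
  obtain ⟨t₀, ht₀mem, ht₀min⟩ := lsc_min_on_compact isCompact_Icc
      ⟨0, le_rfl, hT0⟩ (hHlsc.mono Icc_subset_Ici_self) hbd
  have hglobal : ∀ u : ℝ, 0 ≤ u → H t₀ ≤ H u := by
    intro u hu
    rcases le_or_gt u T with h | h
    · exact ht₀min u ⟨hu, h⟩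
    · have h1 : H t / 2 < H u := hT₀ u ((le_max_left _ _).trans h.le)
      have h2 : H t₀ ≤ H t := ht₀min t ⟨ht, hTt⟩
      have h3 : H t ≤ H t / 2 := by linarith [hHt]
      exact h2.trans (h3.trans h1.le)
  have hHt₀neg : H t₀ < 0 := lt_of_le_of_lt (ht₀min t ⟨ht, hTt⟩) hHt
  have ht₀pos : 0 < t₀ := by
    rcases ht₀mem.1.lt_or_eq with h | h
    · exact h
    · rw [← h, hH0] at hHt₀neg; exact absurd hHt₀neg (lt_irrefl 0)
  set d : ℝ := c t₀ * Real.exp (-t₀) with hddef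
  have hdpos : 0 < d := hfpos t₀ ht₀pos
  set K : ℝ := d / I0 * G 0 with hKdef
  -- difference quotient bound
  have hquot : ∀ B : ℝ, 0 < B → (G t₀ - G (t₀ + B)) / B ≤ K := by
    intro B hB
    have h1 : H t₀ ≤ H (t₀ + B) := hglobal _ (by linarith)
    have hsplit2 : ∫ s in Ioi t₀, f s
        = (∫ s in Ioc t₀ (t₀ + B), f s) + ∫ s in Ioi (t₀ + B), f s :=
      hsplit t₀ (t₀ + B) ht₀pos.le (by linarith)
    have hIocB : (∫ s in Ioc t₀ (t₀ + B), f s) ≤ B * d := by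
      have hconst : ∫ _ in Ioc t₀ (t₀ + B), d = B * d := by
        rw [setIntegral_const, measureReal_def, Real.volume_Ioc, smul_eq_mul,
          ENNReal.toReal_ofReal (by linarith : (0:ℝ) ≤ t₀ + B - t₀)]
        ring
      calc (∫ s in Ioc t₀ (t₀ + B), f s) ≤ ∫ _ in Ioc t₀ (t₀ + B), d :=
            setIntegral_mono_on (hIntIoc _ _ ht₀pos.le)
              (integrableOn_const (by rw [Real.volume_Ioc]; exact ENNReal.ofReal_ne_top))
              measurableSet_Ioc (fun x hx => hcdec t₀ x ht₀pos hx.1.le)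
        _ = B * d := hconst
    have h2 : G t₀ - G (t₀ + B) ≤ (∫ s in Ioc t₀ (t₀ + B), f s) / I0 * G 0 := by
      simp only [hHdef] at h1
      rw [hsplit2, add_div, add_mul] at h1
      linarith
    have h3 : (∫ s in Ioc t₀ (t₀ + B), f s) / I0 * G 0 ≤ B * d / I0 * G 0 := by
      gcongr
      exact hGnonneg 0 Set.self_mem_Ici
    rw [div_le_iff₀ hB]
    have : K * B = B * d / I0 * G 0 := by rw [hKdef]; field_simp
    linarith
  have hliminf : liminf (fun B => (G t₀ - G (t₀ + B)) / B) (nhdsWithin 0 (Ioi 0)) ≤ K := by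
    apply liminf_le_of_frequently_le
    · exact ((eventually_mem_nhdsWithin (s := Ioi (0:ℝ))).mono
        fun B hB => hquot B hB).frequently
    · refine ⟨0, ?_⟩
      rw [eventually_map]
      filter_upwards [eventually_mem_nhdsWithin (s := Ioi (0:ℝ))] with B hB
      have hB : (0:ℝ) < B := hB
      have hmono : G (t₀ + B) ≤ G t₀ :=
        hGdec (mem_Ici.2 ht₀pos.le) (mem_Ici.2 (by linarith)) (by linarith)
      have : (0:ℝ) ≤ (G t₀ - G (t₀ + B)) / B := div_nonneg (by linarith) hB.le
      simpa using this
  -- combine with the differential inequality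
  have hmain := hineq t₀ ht₀pos
  set A : ℝ := ∫ s in Ioc (0:ℝ) t₀, f s with hAdef
  have hAnn : 0 ≤ A := hIocNonneg 0 t₀ le_rfl
  have h5 : (A / d) * liminf (fun B => (G t₀ - G (t₀ + B)) / B) (nhdsWithin 0 (Ioi 0))
      ≤ (A / d) * K := mul_le_mul_of_nonneg_left hliminf (div_nonneg hAnn hdpos.le)
  have h6 : (A / d) * K = A / I0 * G 0 := by
    rw [hKdef]; field_simp
  have h7 : G 0 - G t₀ ≤ A / I0 * G 0 := by
    rw [h6] at h5; linarith
  have h8 : (∫ s in Ioi t₀, f s) = I0 - A := by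
    rw [hI0def, hsplit 0 t₀ le_rfl ht₀pos.le, hAdef]; ring
  have h9 : (0:ℝ) ≤ H t₀ := by
    simp only [hHdef]
    rw [h8, sub_div, div_self (ne_of_gt hI0pos), sub_mul, one_mul]
    linarith
  linarith
end
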